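/- arXiv:math/0607807 — 2 statements merged into one kernel-verified Lean document; each statement's English description precedes it below -/
import Mathlib

section
/- Let r > 0 be an integer such that the set of irreducible r-markings on the curve Γ is nonempty. Then for any pair of distinct components C, C' of Γ with C.C' > 0 and for any node q ∈ C ∩ C', there exist irreducible r-markings μ and μ' such that q occurs in μ and q does not occur in μ'. -/
/-!
Irreducible markings are the complements of connected spanning sub-multigraphs of `G(n,d,k)`.
A connected graph on the `d + k` components has at least `d + k - 1` edges, so an irreducible
`r`-marking forces `#nodes ≥ d + k - 1 + r`; conversely, the complement of the nodes realizing a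
spanning tree has room for `r` nodes. A spanning tree through `q` therefore yields an irreducible
marking avoiding `q`. A marking containing `q` needs a spanning tree avoiding `q`, i.e. `Γ` minus
`q` must stay connected; this fails only when `Γ` is itself a tree, which the node count excludes.
-/

namespace SeveriMarkings

/-- Components of the curve Γ: `L_1, …, L_d` (left) and `F_1, …, F_k` (right). -/
abbrev Comp (d k : ℕ) := Sum (Fin d) (Fin k)

/-- Nodes (edges of the multigraph `G(n,d,k)`): `n` edges between `L_i` and `L_j` for `i < j`,
and one edge between each `L_i` and each `F_j`. -/
abbrev Node (n d k : ℕ) :=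
  Sum (({p : Fin d × Fin d // p.1 < p.2}) × Fin n) (Fin d × Fin k)

/-- The two endpoints of a node. -/
def ends {n d k : ℕ} : Node n d k → Comp d k × Comp d k
  | Sum.inl e => (Sum.inl e.1.1.1, Sum.inl e.1.1.2)
  | Sum.inr e => (Sum.inl e.1, Sum.inr e.2)

/-- `joins e C C'` means the node `e` lies in `C ∩ C'`. -/
def joins {n d k : ℕ} (e : Node n d k) (C C' : Comp d k) : Prop :=
  ends e = (C, C') ∨ ends e = (C', C)

/-- `touches e C` means the node `e` is incident to the component `C`. -/
def touches {n d k : ℕ} (e : Node n d k) (C : Comp d k) : Prop :=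
  (ends e).1 = C ∨ (ends e).2 = C

/-- The simple graph on the components obtained after deleting a set `E` of edges:
two components are adjacent if some remaining edge joins them. Its connectivity is
equivalent to connectivity of the multigraph obtained from `G(n,d,k)` by deleting `E`. -/
def remGraph (n d k : ℕ) (E : Set (Node n d k)) : SimpleGraph (Comp d k) :=
  SimpleGraph.fromRel (fun u v => ∃ e, e ∉ E ∧ ends e = (u, v))

/-- A marking `μ` (an injective tuple of nodes) is irreducible if deleting its entries
from `G(n,d,k)` leaves a connected (multi)graph. -/
def IsIrreducible {n d k r : ℕ} (μ : Fin r → Node n d k) : Prop :=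
  (remGraph n d k (Set.range μ)).Connected

/-- The intersection number `C.C'`: the number of edges between `C` and `C'`. -/
noncomputable def interNum (n d k : ℕ) (C C' : Comp d k) : ℕ :=
  Nat.card {e : Node n d k // joins e C C'}

/-- `μ_{C,C'}`: the number of entries of `μ` lying in `C ∩ C'`. -/
noncomputable def markCount {n d k r : ℕ} (μ : Fin r → Node n d k) (C C' : Comp d k) : ℕ :=
  Nat.card {i : Fin r // joins (μ i) C C'}

/-- `μ_C`: the number of entries of `μ` incident to `C`. -/
noncomputable def compCount {n d k r : ℕ} (μ : Fin r → Node n d k) (C : Comp d k) : ℕ :=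
  Nat.card {i : Fin r // touches (μ i) C}

/-- A single D-move. -/
def DMove {n d k r : ℕ} (μ μ' : Fin r → Node n d k) : Prop :=
  ∃ (D D' : Comp d k) (q q' : Node n d k),
    D ≠ D' ∧ q ≠ q' ∧ joins q D D' ∧ joins q' D D' ∧
    ( (q ∉ Set.range μ ∧ ∃ i, μ i = q' ∧ μ' = Function.update μ i q)
    ∨ (q' ∉ Set.range μ ∧ ∃ i, μ i = q ∧ μ' = Function.update μ i q')
    ∨ (∃ i j, μ i = q ∧ μ j = q' ∧ μ' = μ ∘ Equiv.swap i j)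
    ∨ (q ∉ Set.range μ ∧ q' ∉ Set.range μ ∧ μ' = μ) )

/-- A single T-move. -/
def TMove {n d k r : ℕ} (μ μ' : Fin r → Node n d k) : Prop :=
  ∃ (D D' D'' : Comp d k) (q q' q'' : Node n d k),
    D ≠ D' ∧ D ≠ D'' ∧ D' ≠ D'' ∧
    joins q D' D'' ∧ joins q' D D'' ∧ joins q'' D D' ∧
    ( (q' ∈ Set.range μ ∧ μ' = μ)
    ∨ (q' ∉ Set.range μ ∧
        ( (q'' ∉ Set.range μ ∧ ∃ i, μ i = q ∧ μ' = Function.update μ i q'')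
        ∨ (q ∉ Set.range μ ∧ ∃ i, μ i = q'' ∧ μ' = Function.update μ i q)
        ∨ (∃ i j, μ i = q ∧ μ j = q'' ∧ μ' = μ ∘ Equiv.swap i j)
        ∨ (q ∉ Set.range μ ∧ q'' ∉ Set.range μ ∧ μ' = μ))) )

/-- Equivalence of markings: a finite sequence of D-moves and T-moves. -/
def MarkEquiv {n d k r : ℕ} (μ μ' : Fin r → Node n d k) : Prop :=
  Relation.ReflTransGen (fun a b => DMove a b ∨ TMove a b) μ μ'

/-- Property (*) relative to the distinguished component `Ld`. -/
def PropertyStar {n d k r : ℕ} (Ld : Comp d k) (μ : Fin r → Node n d k) : Prop :=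
  ∀ C C' : Comp d k, C ≠ C' →
    markCount μ C C' =
      if Ld = C ∨ Ld = C' then interNum n d k C C' - 1 else interNum n d k C C'

end SeveriMarkings

namespace SimpleGraph

variable {V : Type*} [Fintype V] {T : SimpleGraph V} [Fintype T.edgeSet]

lemma IsTree.card_image_edgeFinset_add_one_le {β : Type*} [DecidableEq β] (hT : T.IsTree)
    (g : Sym2 V → β) : (T.edgeFinset.image g).card + 1 ≤ Fintype.card V :=
  hT.card_edgeFinset ▸ Nat.add_le_add_right Finset.card_image_le 1

end SimpleGraph

namespace SeveriMarkings

open SimpleGraph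

variable {n d k : ℕ}

lemma ends_fst_ne_snd (e : Node n d k) : (ends e).1 ≠ (ends e).2 := by
  rcases e with e | e
  · exact Sum.inl_injective.ne e.1.2.ne
  · exact Sum.inl_ne_inr

lemma remGraph_adj_iff {E : Set (Node n d k)} {u v : Comp d k} :
    (remGraph n d k E).Adj u v ↔ ∃ e ∉ E, joins e u v := by
  simp only [remGraph, fromRel_adj, joins]
  constructor
  · rintro ⟨-, ⟨e, he, h⟩ | ⟨e, he, h⟩⟩
    exacts [⟨e, he, .inl h⟩, ⟨e, he, .inr h⟩]
  · rintro ⟨e, he, h | h⟩ <;> refine ⟨fun huv => ends_fst_ne_snd e (by simp [h, huv]), ?_⟩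
    exacts [.inl ⟨e, he, h⟩, .inr ⟨e, he, h⟩]

lemma remGraph_anti : Antitone (remGraph n d k) := fun _ _ hEF _ _ h => by
  obtain ⟨e, he, hj⟩ := remGraph_adj_iff.mp h
  exact remGraph_adj_iff.mpr ⟨e, fun h => he (hEF h), hj⟩

lemma joins.touches_right {e : Node n d k} {u v : Comp d k} (h : joins e u v) : touches e v := by
  rcases h with h | h <;> simp [touches, h]

lemma exists_joins_inl_inl (t : Fin n) {x y : Fin d} (hxy : x ≠ y) :
    ∃ e : Node n d k, joins e (.inl x) (.inl y) := by
  rcases hxy.lt_or_gt with h | h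
  exacts [⟨.inl ⟨⟨(x, y), h⟩, t⟩, .inl rfl⟩, ⟨.inl ⟨⟨(y, x), h⟩, t⟩, .inr rfl⟩]

lemma IsIrreducible.add_le_card_node_add_one {r : ℕ} {μ : Fin r → Node n d k}
    (hirr : IsIrreducible μ) (hμ : Function.Injective μ) :
    d + k + r ≤ Fintype.card (Node n d k) + 1 := by
  set G := remGraph n d k (Set.range μ)
  have hconn : Nat.card (Comp d k) ≤ Nat.card G.edgeSet + 1 :=
    hirr.card_vert_le_card_edgeSet_add_one
  let edgeOf : ((Set.range μ)ᶜ : Set (Node n d k)) → G.edgeSet := fun e =>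
    ⟨s((ends e.1).1, (ends e.1).2), remGraph_adj_iff.mpr ⟨e.1, e.2, .inl rfl⟩⟩
  have hsurj : Function.Surjective edgeOf := by
    rintro ⟨e, he⟩
    induction e using Sym2.ind with
    | h u v =>
      obtain ⟨p, hp, hj⟩ := remGraph_adj_iff.mp he
      refine ⟨⟨p, hp⟩, Subtype.ext ?_⟩
      rcases hj with h | h <;> simp [edgeOf, h, Sym2.eq_swap]
  have hedges := Nat.card_le_card_of_surjective edgeOf hsurj
  rw [Nat.card_coe_set_eq (Set.range μ)ᶜ, Set.ncard_compl, Set.ncard_range_of_injective hμ,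
    Nat.card_fin] at hedges
  have hV : Nat.card (Comp d k) = d + k := by simp
  have hr : r ≤ Nat.card (Node n d k) := by
    simpa using Nat.card_le_card_of_injective μ hμ
  rw [← Nat.card_eq_fintype_card]
  omega

lemma exists_irreducible_marking {r : ℕ} {K P : Finset (Node n d k)}
    (hK : (remGraph n d k (↑K)ᶜ).Connected) (hPK : Disjoint P K) (hP : P.card ≤ r)
    (hcard : K.card + r ≤ Fintype.card (Node n d k)) :
    ∃ μ : Fin r → Node n d k, Function.Injective μ ∧ IsIrreducible μ ∧
      ↑P ⊆ Set.range μ ∧ Disjoint (Set.range μ) ↑K := by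
  have hKc : r ≤ Kᶜ.card := by rw [Finset.card_compl]; omega
  obtain ⟨S, hPS, hSK, hS⟩ :=
    Finset.exists_subsuperset_card_eq (Finset.subset_compl_iff_disjoint_right.mpr hPK) hP hKc
  let μ : Fin r → Node n d k := Subtype.val ∘ (S.equivFinOfCardEq hS).symm
  have hrange : Set.range μ = ↑S := by
    simp [μ, Set.range_comp]
  have hSK' : Disjoint (S : Set (Node n d k)) ↑K := by
    simpa using Finset.subset_compl_iff_disjoint_right.mp hSK
  refine ⟨μ, Subtype.val_injective.comp (Equiv.injective _), ?_, ?_, ?_⟩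
  · exact hK.mono (remGraph_anti (by simpa [hrange] using hSK'.subset_compl_right))
  · rw [hrange]; exact_mod_cast hPS
  · rwa [hrange]

section SpanningTree

variable {T : SimpleGraph (Comp d k)}

lemma exists_joins_of_le_remGraph [Nonempty (Node n d k)] {E : Set (Node n d k)}
    (hTE : T ≤ remGraph n d k E) :
    ∃ g : Sym2 (Comp d k) → Node n d k,
      ∀ u v, T.Adj u v → g s(u, v) ∉ E ∧ joins (g s(u, v)) u v := by
  have : ∀ e : Sym2 (Comp d k), ∃ p : Node n d k,
      ∀ u v, e = s(u, v) → T.Adj u v → p ∉ E ∧ joins p u v := by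
    intro e
    induction e using Sym2.ind with
    | h x y =>
      by_cases hxy : T.Adj x y
      · obtain ⟨p, hp, hj⟩ := remGraph_adj_iff.mp (hTE hxy)
        refine ⟨p, fun u v huv _ => ⟨hp, ?_⟩⟩
        rcases Sym2.eq_iff.mp huv with ⟨rfl, rfl⟩ | ⟨rfl, rfl⟩
        exacts [hj, hj.symm]
      · refine ⟨Classical.arbitrary _, fun u v huv huv' => absurd ?_ hxy⟩
        rw [← mem_edgeSet, huv]
        exact huv'
  choose g hg using this
  exact ⟨g, fun u v => hg _ u v rfl⟩

variable [Fintype T.edgeSet]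

lemma connected_remGraph_compl_image (hT : T.Connected) {g : Sym2 (Comp d k) → Node n d k}
    (hg : ∀ u v, T.Adj u v → joins (g s(u, v)) u v) :
    (remGraph n d k (↑(T.edgeFinset.image g))ᶜ).Connected := by
  classical
  refine hT.mono fun u v h => remGraph_adj_iff.mpr ⟨g s(u, v), ?_, hg u v h⟩
  simpa using ⟨s(u, v), h, rfl⟩

end SpanningTree

lemma exists_irreducible_mem_of_connected {r : ℕ} {q : Node n d k}
    (hq : (remGraph n d k {q}).Connected) (hr : 0 < r)
    (hcard : d + k + r ≤ Fintype.card (Node n d k) + 1) :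
    ∃ μ : Fin r → Node n d k, Function.Injective μ ∧ IsIrreducible μ ∧ q ∈ Set.range μ := by
  classical
  have : Nonempty (Node n d k) := ⟨q⟩
  obtain ⟨T, hTq, hT⟩ := hq.exists_isTree_le
  obtain ⟨g, hg⟩ := exists_joins_of_le_remGraph hTq
  have hK : (T.edgeFinset.image g).card + 1 ≤ d + k := by
    simpa using hT.card_image_edgeFinset_add_one_le g
  have hqK : q ∉ T.edgeFinset.image g := by
    simp only [Finset.mem_image, not_exists, not_and]
    intro e he
    induction e using Sym2.ind with
    | h u v => simpa using (hg u v (mem_edgeFinset.mp he)).1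
  obtain ⟨μ, hμ, hirr, hqμ, -⟩ := exists_irreducible_marking (P := {q})
    (connected_remGraph_compl_image hT.connected fun u v h => (hg u v h).2)
    (Finset.disjoint_singleton_left.mpr hqK) (by simpa using hr.nat_succ_le) (by omega)
  exact ⟨μ, hμ, hirr, hqμ (by simp)⟩

lemma exists_irreducible_not_mem {r : ℕ} (hG : (remGraph n d k ∅).Connected)
    (hcard : d + k + r ≤ Fintype.card (Node n d k) + 1) (q : Node n d k) :
    ∃ μ : Fin r → Node n d k, Function.Injective μ ∧ IsIrreducible μ ∧ q ∉ Set.range μ := by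
  classical
  set a := (ends q).1
  set b := (ends q).2
  have hends : ends q = (a, b) := rfl
  have hab : a ≠ b := ends_fst_ne_snd q
  have hqG : edge a b ≤ remGraph n d k ∅ := fun u v h => by
    rw [edge_adj] at h
    refine remGraph_adj_iff.mpr ⟨q, Set.notMem_empty q, ?_⟩
    rcases h.1 with ⟨rfl, rfl⟩ | ⟨rfl, rfl⟩
    exacts [.inl hends, .inr hends]
  have hacyc : (edge a b).IsAcyclic := by
    simpa using isAcyclic_bot.sup_edge_of_not_reachable (by simpa [reachable_bot] using hab)
  obtain ⟨T, hqT, hTG, hT⟩ := hG.exists_isTree_le_of_le_of_isAcyclic hqG hacyc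
  have : Nonempty (Node n d k) := ⟨q⟩
  obtain ⟨g, hg⟩ := exists_joins_of_le_remGraph hTG
  have hg' : ∀ u v, T.Adj u v → joins (Function.update g s(a, b) q s(u, v)) u v := by
    intro u v h
    by_cases huv : s(u, v) = s(a, b)
    · rw [huv, Function.update_self]
      rcases Sym2.eq_iff.mp huv with ⟨rfl, rfl⟩ | ⟨rfl, rfl⟩
      exacts [.inl hends, .inr hends]
    · rw [Function.update_of_ne huv]
      exact (hg u v h).2
  have hqK : q ∈ T.edgeFinset.image (Function.update g s(a, b) q) :=
    Finset.mem_image.mpr ⟨s(a, b), mem_edgeFinset.mpr (hqT (by simp [edge_adj, hab])),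
      Function.update_self _ _ _⟩
  have hK : (T.edgeFinset.image (Function.update g s(a, b) q)).card + 1 ≤ d + k := by
    simpa using hT.card_image_edgeFinset_add_one_le (Function.update g s(a, b) q)
  obtain ⟨μ, hμ, hirr, -, hμK⟩ := exists_irreducible_marking (P := ∅) (r := r)
    (connected_remGraph_compl_image hT.connected hg') (Finset.disjoint_empty_left _) (by simp)
    (by omega)
  exact ⟨μ, hμ, hirr, fun hq => Set.disjoint_right.mp hμK hqK hq⟩

lemma connected_remGraph_singleton (hG : (remGraph n d k ∅).Connected) {q : Node n d k}
    (h : (remGraph n d k {q}).Reachable (ends q).1 (ends q).2) :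
    (remGraph n d k {q}).Connected := by
  have hadj : ∀ u v, (remGraph n d k ∅).Adj u v → (remGraph n d k {q}).Reachable u v := by
    intro u v huv
    obtain ⟨e, -, he⟩ := remGraph_adj_iff.mp huv
    by_cases heq : e = q
    · subst heq
      rcases he with he | he <;> rw [he] at h
      exacts [h, h.symm]
    · exact (remGraph_adj_iff.mpr ⟨e, heq, he⟩).reachable
  have := hG.nonempty
  refine ⟨fun u v => ?_⟩
  obtain ⟨p⟩ := hG.preconnected u v
  induction p with
  | nil => rfl
  | cons huv _ ih => exact (hadj _ _ huv).trans ih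

lemma reachable_of_joins {E : Set (Node n d k)} {e : Node n d k} {u v : Comp d k} (he : e ∉ E)
    (h : joins e u v) : (remGraph n d k E).Reachable u v :=
  (remGraph_adj_iff.mpr ⟨e, he, h⟩).reachable

lemma reachable_remGraph_singleton_inl (hcard : d + k ≤ Fintype.card (Node n d k))
    {a b : Fin d} (hab : a < b) (t : Fin n) :
    (remGraph n d k {.inl ⟨⟨(a, b), hab⟩, t⟩}).Reachable (.inl a) (.inl b) := by
  by_cases hk : 0 < k
  · let f : Fin k := ⟨0, hk⟩
    exact (reachable_of_joins (e := .inr (a, f)) (by simp) (.inl rfl)).trans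
      (reachable_of_joins (e := .inr (b, f)) (by simp) (.inr rfl))
  by_cases hn : 2 ≤ n
  · obtain ⟨s, hst⟩ := Fintype.exists_ne_of_one_lt_card (by rw [Fintype.card_fin]; omega) t
    exact reachable_of_joins (e := .inl ⟨⟨(a, b), hab⟩, s⟩) (by simp [hst]) (.inl rfl)
  obtain rfl : n = 1 := by have := t.pos; omega
  obtain rfl : k = 0 := by omega
  have hd : 2 < d := by
    by_contra hd
    obtain rfl : d = 2 := by have : (b : ℕ) < d := b.isLt; have : (a : ℕ) < b := hab; omega
    have : Fintype.card (Node 1 2 0) = 1 := by decide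
    omega
  obtain ⟨c, -, hc⟩ := Finset.exists_mem_notMem_of_card_lt_card (s := {a, b})
    (t := Finset.univ) (Finset.card_le_two.trans_lt (by simpa using hd))
  simp only [Finset.mem_insert, Finset.mem_singleton, not_or] at hc
  have hq : ∀ e : Node 1 d 0, touches e (.inl c) → e ∉ ({.inl ⟨⟨(a, b), hab⟩, t⟩} : Set _) := by
    rintro e he rfl
    simp only [touches, ends, Sum.inl.injEq] at he
    exact he.elim (fun h => hc.1 h.symm) (fun h => hc.2 h.symm)
  obtain ⟨e₁, he₁⟩ := exists_joins_inl_inl (k := 0) t (Ne.symm hc.1)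
  obtain ⟨e₂, he₂⟩ := exists_joins_inl_inl (k := 0) t (Ne.symm hc.2)
  exact (reachable_of_joins (hq e₁ he₁.touches_right) he₁).trans
    (reachable_of_joins (hq e₂ he₂.touches_right) he₂.symm)

lemma reachable_remGraph_singleton_inr (hcard : d + k ≤ Fintype.card (Node n d k))
    (i : Fin d) (j : Fin k) : (remGraph n d k {.inr (i, j)}).Reachable (.inl i) (.inr j) := by
  have hd : 1 < d := by
    by_contra hd
    obtain rfl : d = 1 := by have := i.pos; omega
    have : IsEmpty {p : Fin 1 × Fin 1 // p.1 < p.2} :=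
      ⟨fun p => (Subsingleton.elim p.1.1 p.1.2 ▸ p.2 : p.1.2 < p.1.2).false⟩
    have : Fintype.card (Node n 1 k) = k := by simp
    omega
  obtain ⟨i', hi'⟩ := Fintype.exists_ne_of_one_lt_card (by simpa using hd) i
  by_cases hn : 0 < n
  · obtain ⟨e, he⟩ := exists_joins_inl_inl (k := k) ⟨0, hn⟩ hi'.symm
    exact (reachable_of_joins (by rintro rfl; simp [joins, ends] at he) he).trans
      (reachable_of_joins (e := .inr (i', j)) (by simp [hi']) (.inl rfl))
  have hk : 1 < k := by
    by_contra hk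
    obtain rfl : k = 1 := by have := j.pos; omega
    obtain rfl : n = 0 := by omega
    have : Fintype.card (Node 0 d 1) = d := by simp
    omega
  obtain ⟨j', hj'⟩ := Fintype.exists_ne_of_one_lt_card (by simpa using hk) j
  exact ((reachable_of_joins (e := .inr (i, j')) (by simp [hj']) (.inl rfl)).trans
    (reachable_of_joins (e := .inr (i', j')) (by simp [hi']) (.inr rfl))).trans
    (reachable_of_joins (e := .inr (i', j)) (by simp [hi']) (.inl rfl))

/-- The node count rules out exactly the trees `G(1,2,0)`, `G(n,1,k)` and `G(0,d,1)`, in which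
every node is a bridge. -/
lemma reachable_ends_remGraph_singleton (hcard : d + k ≤ Fintype.card (Node n d k))
    (q : Node n d k) : (remGraph n d k {q}).Reachable (ends q).1 (ends q).2 := by
  rcases q with ⟨⟨⟨a, b⟩, hab⟩, t⟩ | ⟨i, j⟩
  exacts [reachable_remGraph_singleton_inl hcard hab t, reachable_remGraph_singleton_inr hcard i j]

theorem stmt0_general (n d k r : ℕ) (hr : 0 < r)
    (hex : ∃ μ : Fin r → Node n d k, Function.Injective μ ∧ IsIrreducible μ)
    (q : Node n d k) :
    (∃ μ : Fin r → Node n d k, Function.Injective μ ∧ IsIrreducible μ ∧ q ∈ Set.range μ) ∧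
    (∃ μ' : Fin r → Node n d k, Function.Injective μ' ∧ IsIrreducible μ' ∧ q ∉ Set.range μ') := by
  obtain ⟨μ, hμ, hirr⟩ := hex
  have hcard := hirr.add_le_card_node_add_one hμ
  have hG : (remGraph n d k ∅).Connected := hirr.mono (remGraph_anti (Set.empty_subset _))
  have hGq : (remGraph n d k {q}).Connected :=
    connected_remGraph_singleton hG (reachable_ends_remGraph_singleton (by omega) q)
  exact ⟨exists_irreducible_mem_of_connected hGq hr hcard, exists_irreducible_not_mem hG hcard q⟩

/-- Claim 3 of the paper. Let `r > 0` be an integer such that the set of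
irreducible `r`-markings on the curve `Γ` is nonempty. Then for any pair of distinct
components `C, C'` of `Γ` with `C.C' > 0` and for any node `q ∈ C ∩ C'`, there exist
irreducible `r`-markings `μ` and `μ'` such that `q` occurs in `μ` and `q` does not occur
in `μ'`. -/
theorem stmt0 (n d k r : ℕ) (hd : 0 < d) (hr : 0 < r)
    (hex : ∃ μ : Fin r → Node n d k, Function.Injective μ ∧ IsIrreducible μ)
    (C C' : Comp d k) (hCC : C ≠ C') (hpos : 0 < interNum n d k C C')
    (q : Node n d k) (hq : joins q C C') :
    (∃ μ : Fin r → Node n d k, Function.Injective μ ∧ IsIrreducible μ ∧ q ∈ Set.range μ) ∧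
    (∃ μ' : Fin r → Node n d k, Function.Injective μ' ∧ IsIrreducible μ' ∧ q ∉ Set.range μ') :=
  stmt0_general n d k r hr hex q

end SeveriMarkings
end

section
/- Assume n = 0. Then any two irreducible r-markings on the curve Γ are equivalent, i.e., one can be obtained from the other by a finite sequence of D-moves, Q^h-moves and Q^v-moves. -/
namespace SeveriMarkings

/-- A single Qʰ-move (defined when `n = 0`): for distinct `L`-components `X, X'` and
distinct `F`-components `Y, Y'`, with nodes `q ∈ X ∩ Y`, `q' ∈ X ∩ Y'`, `q'' ∈ X' ∩ Y`,
`q''' ∈ X' ∩ Y'`: if `q'', q''' ∉ μ` the move exchanges `q` and `q'` as in a D-move;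
otherwise it fixes `μ`. -/
def QhMove {d k r : ℕ} (μ μ' : Fin r → Node 0 d k) : Prop :=
  ∃ (X X' : Fin d) (Y Y' : Fin k), X ≠ X' ∧ Y ≠ Y' ∧
    ( ( (Sum.inr (X', Y) : Node 0 d k) ∉ Set.range μ ∧
        (Sum.inr (X', Y') : Node 0 d k) ∉ Set.range μ ∧
        ( ((Sum.inr (X, Y') : Node 0 d k) ∉ Set.range μ ∧
            ∃ i, μ i = Sum.inr (X, Y) ∧ μ' = Function.update μ i (Sum.inr (X, Y')))
        ∨ ((Sum.inr (X, Y) : Node 0 d k) ∉ Set.range μ ∧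
            ∃ i, μ i = Sum.inr (X, Y') ∧ μ' = Function.update μ i (Sum.inr (X, Y)))
        ∨ (∃ i j, μ i = Sum.inr (X, Y) ∧ μ j = Sum.inr (X, Y') ∧ μ' = μ ∘ Equiv.swap i j)
        ∨ ((Sum.inr (X, Y) : Node 0 d k) ∉ Set.range μ ∧
            (Sum.inr (X, Y') : Node 0 d k) ∉ Set.range μ ∧ μ' = μ) ) )
    ∨ ( ((Sum.inr (X', Y) : Node 0 d k) ∈ Set.range μ ∨
          (Sum.inr (X', Y') : Node 0 d k) ∈ Set.range μ) ∧ μ' = μ ) )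

/-- A single Qᵛ-move (defined when `n = 0`): with notation as in `QhMove`, if
`q', q''' ∉ μ` the move exchanges `q` and `q''`; otherwise it fixes `μ`. -/
def QvMove {d k r : ℕ} (μ μ' : Fin r → Node 0 d k) : Prop :=
  ∃ (X X' : Fin d) (Y Y' : Fin k), X ≠ X' ∧ Y ≠ Y' ∧
    ( ( (Sum.inr (X, Y') : Node 0 d k) ∉ Set.range μ ∧
        (Sum.inr (X', Y') : Node 0 d k) ∉ Set.range μ ∧
        ( ((Sum.inr (X', Y) : Node 0 d k) ∉ Set.range μ ∧
            ∃ i, μ i = Sum.inr (X, Y) ∧ μ' = Function.update μ i (Sum.inr (X', Y)))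
        ∨ ((Sum.inr (X, Y) : Node 0 d k) ∉ Set.range μ ∧
            ∃ i, μ i = Sum.inr (X', Y) ∧ μ' = Function.update μ i (Sum.inr (X, Y)))
        ∨ (∃ i j, μ i = Sum.inr (X, Y) ∧ μ j = Sum.inr (X', Y) ∧ μ' = μ ∘ Equiv.swap i j)
        ∨ ((Sum.inr (X, Y) : Node 0 d k) ∉ Set.range μ ∧
            (Sum.inr (X', Y) : Node 0 d k) ∉ Set.range μ ∧ μ' = μ) ) )
    ∨ ( ((Sum.inr (X, Y') : Node 0 d k) ∈ Set.range μ ∨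
          (Sum.inr (X', Y') : Node 0 d k) ∈ Set.range μ) ∧ μ' = μ ) )

/-- Equivalence of markings in the case `n = 0`: a finite sequence of D-moves,
Qʰ-moves and Qᵛ-moves. -/
def MarkEquiv0 {d k r : ℕ} (μ μ' : Fin r → Node 0 d k) : Prop :=
  Relation.ReflTransGen (fun a b => DMove a b ∨ QhMove a b ∨ QvMove a b) μ μ'


/-! ### Auxiliary development for the case `n = 0`. -/

section Aux

variable {d k r : ℕ}

/-- Shorthand for the node between `L_x` and `F_y` when `n = 0`. -/
abbrev nd (x : Fin d) (y : Fin k) : Node 0 d k := Sum.inr (x, y)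

lemma node_cases (e : Node 0 d k) : ∃ x y, e = nd x y := by
  rcases e with ⟨_, f⟩ | ⟨x, y⟩
  · exact f.elim0
  · exact ⟨x, y, rfl⟩

lemma nd_inj {x x' : Fin d} {y y' : Fin k} : nd x y = nd x' y' ↔ x = x' ∧ y = y' := by
  simp [nd, Prod.ext_iff]

lemma nd_ne_left {x x' : Fin d} {y y' : Fin k} (h : x ≠ x') : nd x y ≠ nd x' y' :=
  fun he => h (nd_inj.mp he).1

lemma nd_ne_right {x x' : Fin d} {y y' : Fin k} (h : y ≠ y') : nd x y ≠ nd x' y' :=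
  fun he => h (nd_inj.mp he).2

/-- Two-sided mark equivalence. -/
def ME (μ ν : Fin r → Node 0 d k) : Prop := MarkEquiv0 μ ν ∧ MarkEquiv0 ν μ

lemma ME.refl (μ : Fin r → Node 0 d k) : ME μ μ :=
  ⟨Relation.ReflTransGen.refl, Relation.ReflTransGen.refl⟩

lemma ME.trans {μ ν ρ : Fin r → Node 0 d k} (h1 : ME μ ν) (h2 : ME ν ρ) : ME μ ρ :=
  ⟨h1.1.trans h2.1, h2.2.trans h1.2⟩

lemma ME.symm {μ ν : Fin r → Node 0 d k} (h : ME μ ν) : ME ν μ := ⟨h.2, h.1⟩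

lemma ME.of_steps {μ ν : Fin r → Node 0 d k}
    (h1 : QhMove μ ν ∨ QvMove μ ν) (h2 : QhMove ν μ ∨ QvMove ν μ) : ME μ ν :=
  ⟨Relation.ReflTransGen.single (Or.inr h1), Relation.ReflTransGen.single (Or.inr h2)⟩

lemma mem_range_update_iff {μ : Fin r → Node 0 d k} (hinj : Function.Injective μ)
    (i : Fin r) (v w : Node 0 d k) :
    w ∈ Set.range (Function.update μ i v) ↔ w = v ∨ (w ∈ Set.range μ ∧ w ≠ μ i) := by
  constructor
  · rintro ⟨j, hj⟩
    by_cases hji : j = i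
    · subst hji; simp at hj; exact Or.inl hj.symm
    · rw [Function.update_of_ne hji] at hj
      exact Or.inr ⟨⟨j, hj⟩, by rintro rfl; exact hji (hinj hj)⟩
  · rintro (rfl | ⟨⟨j, hj⟩, hne⟩)
    · exact ⟨i, by simp⟩
    · have hji : j ≠ i := by rintro rfl; exact hne hj.symm
      exact ⟨j, by rw [Function.update_of_ne hji]; exact hj⟩

lemma not_mem_range_update {μ : Fin r → Node 0 d k} (hinj : Function.Injective μ)
    {i : Fin r} {v w : Node 0 d k} (h1 : w ≠ v) (h2 : w ∉ Set.range μ ∨ w = μ i) :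
    w ∉ Set.range (Function.update μ i v) := by
  rw [mem_range_update_iff hinj]
  rintro (rfl | ⟨hw, hne⟩)
  · exact h1 rfl
  · rcases h2 with h2 | h2
    · exact h2 hw
    · exact hne h2

lemma update_injective {μ : Fin r → Node 0 d k} (hinj : Function.Injective μ)
    {v : Node 0 d k} (hv : v ∉ Set.range μ) (i : Fin r) :
    Function.Injective (Function.update μ i v) := by
  intro a b hab
  by_cases ha : a = i <;> by_cases hb : b = i
  · rw [ha, hb]
  · subst ha
    rw [Function.update_self, Function.update_of_ne hb] at hab
    exact absurd ⟨b, hab.symm⟩ hv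
  · subst hb
    rw [Function.update_self, Function.update_of_ne ha] at hab
    exact absurd ⟨a, hab⟩ hv
  · rw [Function.update_of_ne ha, Function.update_of_ne hb] at hab
    exact hinj hab

lemma comp_swap_injective {μ : Fin r → Node 0 d k} (hinj : Function.Injective μ)
    (i j : Fin r) : Function.Injective (μ ∘ Equiv.swap i j) :=
  hinj.comp (Equiv.swap i j).injective

lemma range_comp_swap (μ : Fin r → Node 0 d k) (i j : Fin r) :
    Set.range (μ ∘ Equiv.swap i j) = Set.range μ := by
  rw [Set.range_comp, Equiv.range_eq_univ, Set.image_univ]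

/-- Basic Qʰ replacement move, both directions. -/
lemma qh_stepME {μ : Fin r → Node 0 d k} (hinj : Function.Injective μ)
    {x x' : Fin d} {y y' : Fin k} (hx : x ≠ x') (hy : y ≠ y')
    (h1 : nd x' y ∉ Set.range μ) (h2 : nd x' y' ∉ Set.range μ)
    (h3 : nd x y' ∉ Set.range μ) {i : Fin r} (h4 : μ i = nd x y) :
    ME μ (Function.update μ i (nd x y')) := by
  refine ME.of_steps (Or.inl ?_) (Or.inl ?_)
  · exact ⟨x, x', y, y', hx, hy, Or.inl ⟨h1, h2, Or.inl ⟨h3, i, h4, rfl⟩⟩⟩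
  · refine ⟨x, x', y', y, hx, hy.symm, Or.inl ⟨?_, ?_, Or.inl ⟨?_, i, by simp, ?_⟩⟩⟩
    · exact not_mem_range_update hinj (nd_ne_left (Ne.symm hx)) (Or.inl h2)
    · exact not_mem_range_update hinj (nd_ne_left (Ne.symm hx)) (Or.inl h1)
    · exact not_mem_range_update hinj (nd_ne_right hy) (Or.inr h4.symm)
    · rw [Function.update_idem, show (Sum.inr (x,y) : Node 0 d k) = μ i from h4.symm,
        Function.update_eq_self]

/-- Basic Qᵛ replacement move, both directions. -/
lemma qv_stepME {μ : Fin r → Node 0 d k} (hinj : Function.Injective μ)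
    {x x' : Fin d} {y y' : Fin k} (hx : x ≠ x') (hy : y ≠ y')
    (h1 : nd x y' ∉ Set.range μ) (h2 : nd x' y' ∉ Set.range μ)
    (h3 : nd x' y ∉ Set.range μ) {i : Fin r} (h4 : μ i = nd x y) :
    ME μ (Function.update μ i (nd x' y)) := by
  refine ME.of_steps (Or.inr ?_) (Or.inr ?_)
  · exact ⟨x, x', y, y', hx, hy, Or.inl ⟨h1, h2, Or.inl ⟨h3, i, h4, rfl⟩⟩⟩
  · refine ⟨x', x, y, y', hx.symm, hy, Or.inl ⟨?_, ?_, Or.inl ⟨?_, i, by simp, ?_⟩⟩⟩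
    · exact not_mem_range_update hinj (nd_ne_right (Ne.symm hy)) (Or.inl h2)
    · exact not_mem_range_update hinj (nd_ne_right (Ne.symm hy)) (Or.inl h1)
    · exact not_mem_range_update hinj (nd_ne_left hx) (Or.inr h4.symm)
    · rw [Function.update_idem, show (Sum.inr (x,y) : Node 0 d k) = μ i from h4.symm,
        Function.update_eq_self]

/-- Basic Qʰ swap move, both directions. -/
lemma qh_swapME {μ : Fin r → Node 0 d k}
    {x x' : Fin d} {y y' : Fin k} (hx : x ≠ x') (hy : y ≠ y')
    (h1 : nd x' y ∉ Set.range μ) (h2 : nd x' y' ∉ Set.range μ)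
    {i j : Fin r} (h4 : μ i = nd x y) (h5 : μ j = nd x y') :
    ME μ (μ ∘ Equiv.swap i j) := by
  refine ME.of_steps (Or.inl ?_) (Or.inl ?_)
  · exact ⟨x, x', y, y', hx, hy, Or.inl ⟨h1, h2,
      Or.inr (Or.inr (Or.inl ⟨i, j, h4, h5, rfl⟩))⟩⟩
  · refine ⟨x, x', y, y', hx, hy, Or.inl ⟨?_, ?_,
      Or.inr (Or.inr (Or.inl ⟨j, i, ?_, ?_, ?_⟩))⟩⟩
    · rw [range_comp_swap]; exact h1
    · rw [range_comp_swap]; exact h2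
    · simp [Function.comp, Equiv.swap_apply_right, h4]
    · simp [Function.comp, Equiv.swap_apply_left, h5]
    · funext l
      simp only [Function.comp_apply]
      rw [Equiv.swap_comm j i, Equiv.swap_apply_self]

/-- Basic Qᵛ swap move, both directions. -/
lemma qv_swapME {μ : Fin r → Node 0 d k}
    {x x' : Fin d} {y y' : Fin k} (hx : x ≠ x') (hy : y ≠ y')
    (h1 : nd x y' ∉ Set.range μ) (h2 : nd x' y' ∉ Set.range μ)
    {i j : Fin r} (h4 : μ i = nd x y) (h5 : μ j = nd x' y) :
    ME μ (μ ∘ Equiv.swap i j) := by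
  refine ME.of_steps (Or.inr ?_) (Or.inr ?_)
  · exact ⟨x, x', y, y', hx, hy, Or.inl ⟨h1, h2,
      Or.inr (Or.inr (Or.inl ⟨i, j, h4, h5, rfl⟩))⟩⟩
  · refine ⟨x, x', y, y', hx, hy, Or.inl ⟨?_, ?_,
      Or.inr (Or.inr (Or.inl ⟨j, i, ?_, ?_, ?_⟩))⟩⟩
    · rw [range_comp_swap]; exact h1
    · rw [range_comp_swap]; exact h2
    · simp [Function.comp, Equiv.swap_apply_right, h4]
    · simp [Function.comp, Equiv.swap_apply_left, h5]
    · funext l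
      simp only [Function.comp_apply]
      rw [Equiv.swap_comm j i, Equiv.swap_apply_self]

end Aux


section Graph

variable {d k r : ℕ}

lemma adj_iff (E : Set (Node 0 d k)) (x : Fin d) (y : Fin k) :
    (remGraph 0 d k E).Adj (Sum.inl x) (Sum.inr y) ↔ nd x y ∉ E := by
  rw [remGraph, SimpleGraph.fromRel_adj]
  constructor
  · rintro ⟨-, ⟨e, he, hend⟩ | ⟨e, he, hend⟩⟩ <;>
      obtain ⟨x', y', rfl⟩ := node_cases e
    · have : x' = x ∧ y' = y := by
        have h1 := congrArg Prod.fst hend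
        have h2 := congrArg Prod.snd hend
        simp only [ends] at h1 h2
        exact ⟨Sum.inl.inj h1, Sum.inr.inj h2⟩
      obtain ⟨rfl, rfl⟩ := this
      exact he
    · have h1 := congrArg Prod.fst hend
      simp only [ends] at h1
      exact absurd h1 (by simp)
  · intro h
    exact ⟨by simp, Or.inl ⟨nd x y, h, rfl⟩⟩

lemma adj_shape {E : Set (Node 0 d k)} {u v : Comp d k}
    (h : (remGraph 0 d k E).Adj u v) :
    ∃ x y, nd x y ∉ E ∧
      ((u = Sum.inl x ∧ v = Sum.inr y) ∨ (u = Sum.inr y ∧ v = Sum.inl x)) := by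
  rw [remGraph, SimpleGraph.fromRel_adj] at h
  rcases h.2 with ⟨e, he, hend⟩ | ⟨e, he, hend⟩ <;>
      obtain ⟨x', y', rfl⟩ := node_cases e <;>
      have h1 := congrArg Prod.fst hend <;>
      have h2 := congrArg Prod.snd hend <;>
      simp only [ends] at h1 h2
  · exact ⟨x', y', he, Or.inl ⟨h1.symm, h2.symm⟩⟩
  · exact ⟨x', y', he, Or.inr ⟨h2.symm, h1.symm⟩⟩

lemma connected_transfer {V : Type*} {G H : SimpleGraph V} (hG : G.Connected)
    (h : ∀ u v, G.Adj u v → H.Reachable u v) : H.Connected := by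
  rw [SimpleGraph.connected_iff] at hG ⊢
  refine ⟨fun u v => ?_, hG.2⟩
  obtain ⟨w⟩ := hG.1 u v
  induction w with
  | nil => exact SimpleGraph.Reachable.refl _
  | cons ha _ ih => exact (h _ _ ha).trans ih

lemma exists_free_in_col {μ : Fin r → Node 0 d k} (hirr : IsIrreducible μ) (hd : 0 < d)
    (y : Fin k) : ∃ x, nd x y ∉ Set.range μ := by
  obtain ⟨w⟩ := hirr.preconnected (Sum.inr y) (Sum.inl (⟨0, hd⟩ : Fin d))
  cases w with
  | cons ha _ =>
    obtain ⟨x', y', hfree, hcase⟩ := adj_shape ha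
    rcases hcase with ⟨h1, -⟩ | ⟨h1, -⟩
    · exact absurd h1 (by simp)
    · obtain rfl := Sum.inr.inj h1
      exact ⟨x', hfree⟩

lemma exists_free_in_row {μ : Fin r → Node 0 d k} (hirr : IsIrreducible μ) (hk : 0 < k)
    (x : Fin d) : ∃ y, nd x y ∉ Set.range μ := by
  obtain ⟨w⟩ := hirr.preconnected (Sum.inl x) (Sum.inr (⟨0, hk⟩ : Fin k))
  cases w with
  | cons ha _ =>
    obtain ⟨x', y', hfree, hcase⟩ := adj_shape ha
    rcases hcase with ⟨h1, -⟩ | ⟨h1, -⟩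
    · obtain rfl := Sum.inl.inj h1
      exact ⟨y', hfree⟩
    · exact absurd h1 (by simp)

lemma two_le_of_mem {μ : Fin r → Node 0 d k} (hirr : IsIrreducible μ) {x : Fin d} {y : Fin k}
    (hmem : nd x y ∈ Set.range μ) : 2 ≤ d ∧ 2 ≤ k := by
  constructor
  · by_contra hlt
    have hsub : Subsingleton (Fin d) := by
      rw [Fin.subsingleton_iff_le_one]; omega
    obtain ⟨x', hfree⟩ := exists_free_in_col hirr x.pos y
    exact hfree (hsub.elim x' x ▸ hmem)
  · by_contra hlt
    have hsub : Subsingleton (Fin k) := by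
      rw [Fin.subsingleton_iff_le_one]; omega
    obtain ⟨y', hfree⟩ := exists_free_in_row hirr y.pos x
    exact hfree (hsub.elim y' y ▸ hmem)

/-- Irreducibility is preserved by the Phase-1 move. -/
lemma irr_update {μ : Fin r → Node 0 d k} (hinj : Function.Injective μ)
    (hirr : IsIrreducible μ) {i : Fin r} {x x1 : Fin d} {y1 yk : Fin k}
    (hxx : x ≠ x1) (hyy : y1 ≠ yk) (h4 : μ i = nd x yk)
    (f1 : nd x y1 ∉ Set.range μ) (f2 : nd x1 y1 ∉ Set.range μ)
    (f3 : nd x1 yk ∉ Set.range μ) :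
    IsIrreducible (Function.update μ i (nd x y1)) := by
  set E' := Set.range (Function.update μ i (nd x y1)) with hE'
  have hxyk : nd x yk ∉ E' :=
    not_mem_range_update hinj (nd_ne_right (Ne.symm hyy)) (Or.inr h4.symm)
  have hx1yk : nd x1 yk ∉ E' :=
    not_mem_range_update hinj (nd_ne_left (Ne.symm hxx)) (Or.inl f3)
  have hx1y1 : nd x1 y1 ∉ E' :=
    not_mem_range_update hinj (nd_ne_left (Ne.symm hxx)) (Or.inl f2)
  have key : (remGraph 0 d k E').Reachable (Sum.inl x) (Sum.inr y1) := by
    have e1 : (remGraph 0 d k E').Adj (Sum.inl x) (Sum.inr yk) := (adj_iff _ _ _).mpr hxyk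
    have e2 : (remGraph 0 d k E').Adj (Sum.inl x1) (Sum.inr yk) := (adj_iff _ _ _).mpr hx1yk
    have e3 : (remGraph 0 d k E').Adj (Sum.inl x1) (Sum.inr y1) := (adj_iff _ _ _).mpr hx1y1
    exact e1.reachable.trans (e2.symm.reachable.trans e3.reachable)
  refine connected_transfer hirr (fun u v hadj => ?_)
  obtain ⟨x', y', hfree, hcase⟩ := adj_shape hadj
  by_cases heq : nd x' y' = nd x y1
  · obtain ⟨rfl, rfl⟩ := nd_inj.mp heq
    rcases hcase with ⟨rfl, rfl⟩ | ⟨rfl, rfl⟩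
    · exact key
    · exact key.symm
  · have hfree' : nd x' y' ∉ E' := not_mem_range_update hinj heq (Or.inl hfree)
    have : (remGraph 0 d k E').Adj (Sum.inl x') (Sum.inr y') := (adj_iff _ _ _).mpr hfree'
    rcases hcase with ⟨rfl, rfl⟩ | ⟨rfl, rfl⟩
    · exact this.reachable
    · exact this.symm.reachable

end Graph


section Phases

variable {d k r : ℕ}

/-- The coordinates of a node (for `n = 0`). -/
def pr : Node 0 d k → Fin d × Fin k
  | Sum.inl e => e.2.elim0
  | Sum.inr c => c

@[simp] lemma pr_nd (x : Fin d) (y : Fin k) : pr (nd x y) = (x, y) := rfl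

lemma nd_pr (e : Node 0 d k) : e = nd (pr e).1 (pr e).2 := by
  obtain ⟨x, y, rfl⟩ := node_cases e; rfl

open Finset in
/-- Phase 1: clearing the column `K1`, preserving irreducibility. -/
lemma phase1 (K1 : Fin k) (hd : 0 < d) :
    ∀ (m : ℕ) (μ : Fin r → Node 0 d k), Function.Injective μ → IsIrreducible μ →
      (univ.filter fun i => (pr (μ i)).2 = K1).card ≤ m →
      ∃ ν, ME μ ν ∧ Function.Injective ν ∧ IsIrreducible ν ∧
        ∀ x, nd x K1 ∉ Set.range ν := by
  intro m
  induction m with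
  | zero =>
    intro μ hinj hirr hcard
    refine ⟨μ, ME.refl μ, hinj, hirr, fun x hx => ?_⟩
    obtain ⟨i, hi⟩ := hx
    have : i ∈ univ.filter fun i => (pr (μ i)).2 = K1 := by
      simp [hi]
    rw [Finset.card_eq_zero.mp (Nat.le_zero.mp hcard)] at this
    exact absurd this (Finset.notMem_empty i)
  | succ m ih =>
    intro μ hinj hirr hcard
    by_cases h0 : (univ.filter fun i => (pr (μ i)).2 = K1).card = 0
    · exact ih μ hinj hirr (by omega)
    · classical
      -- there is an entry in column K1
      obtain ⟨i0, hi0⟩ := Finset.card_pos.mp (Nat.pos_of_ne_zero h0)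
      rw [Finset.mem_filter] at hi0
      have hx0mem : nd (pr (μ i0)).1 K1 ∈ Set.range μ := by
        refine ⟨i0, ?_⟩
        conv_lhs => rw [nd_pr (μ i0)]
        rw [hi0.2]
      -- minimize distance to F_{K1} among rows of column-K1 entries
      set G := remGraph 0 d k (Set.range μ) with hG
      have hFne : ((univ : Finset (Fin d)).filter
          fun x => nd x K1 ∈ Set.range μ).Nonempty :=
        ⟨(pr (μ i0)).1, by
          simp only [Finset.mem_filter, Finset.mem_univ, true_and]; exact hx0mem⟩
      obtain ⟨xs, hxsmem, hxsmin⟩ := Finset.exists_min_image _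
        (fun x => G.dist (Sum.inl x) (Sum.inr K1)) hFne
      rw [Finset.mem_filter] at hxsmem
      have hxs : nd xs K1 ∈ Set.range μ := hxsmem.2
      obtain ⟨p, hp⟩ :=
        (hirr.preconnected (Sum.inl xs) (Sum.inr K1)).exists_walk_length_eq_dist
      cases p with
      | cons ha q =>
        obtain ⟨x', y1, hf1, hcase⟩ := adj_shape ha
        rcases hcase with ⟨hu, hv⟩ | ⟨hu, -⟩
        swap
        · exact absurd hu (by simp)
        obtain rfl := Sum.inl.inj hu
        subst hv
        cases q with
        | nil => exact absurd hxs hf1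
        | cons hb q2 =>
          obtain ⟨x1, y1', hf2, hcase2⟩ := adj_shape hb
          rcases hcase2 with ⟨hu2, -⟩ | ⟨hu2, hv2⟩
          · exact absurd hu2 (by simp)
          obtain rfl := Sum.inr.inj hu2
          subst hv2
          -- key freeness: nd x1 K1 ∉ range μ
          have hf3 : nd x1 K1 ∉ Set.range μ := by
            intro hmem
            have h1 : G.dist (Sum.inl xs) (Sum.inr K1) ≤ G.dist (Sum.inl x1) (Sum.inr K1) :=
              hxsmin x1 (by
                simp only [Finset.mem_filter, Finset.mem_univ, true_and]; exact hmem)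
            have h2 : G.dist (Sum.inl x1) (Sum.inr K1) ≤ q2.length := SimpleGraph.dist_le q2
            have h3 : q2.length + 2 = G.dist (Sum.inl xs) (Sum.inr K1) := by
              rw [← hp]; simp [SimpleGraph.Walk.length_cons]
            omega
          have hxx : xs ≠ x1 := by rintro rfl; exact hf3 hxs
          have hyy : y1 ≠ K1 := by rintro rfl; exact hf1 hxs
          obtain ⟨i, hi⟩ := hxs
          -- the move
          have hME := qh_stepME hinj hxx (Ne.symm hyy) hf3 hf2 hf1 hi
          have hinj2 := update_injective hinj hf1 i
          have hirr2 := irr_update hinj hirr hxx hyy hi hf1 hf2 hf3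
          have hcard2 : ((univ : Finset (Fin r)).filter
              fun j => (pr (Function.update μ i (nd xs y1) j)).2 = K1).card ≤ m := by
            have hsub : ((univ : Finset (Fin r)).filter
                fun j => (pr (Function.update μ i (nd xs y1) j)).2 = K1) ⊆
                ((univ : Finset (Fin r)).filter fun j => (pr (μ j)).2 = K1).erase i := by
              intro j hj
              rw [Finset.mem_filter] at hj
              rcases eq_or_ne j i with rfl | hji
              · rw [Function.update_self] at hj
                exact absurd hj.2 (by simpa using hyy)
              · rw [Function.update_of_ne hji] at hj
                exact Finset.mem_erase.mpr ⟨hji, by simp [hj.2]⟩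
            have hic : i ∈ (univ : Finset (Fin r)).filter fun j => (pr (μ j)).2 = K1 := by
              simp [hi]
            calc _ ≤ (((univ : Finset (Fin r)).filter
                  fun j => (pr (μ j)).2 = K1).erase i).card := Finset.card_le_card hsub
              _ = ((univ : Finset (Fin r)).filter
                  fun j => (pr (μ j)).2 = K1).card - 1 := Finset.card_erase_of_mem hic
              _ ≤ m := by omega
          obtain ⟨ν, hν1, hν2, hν3, hν4⟩ :=
            ih (Function.update μ i (nd xs y1)) hinj2 hirr2 hcard2
          exact ⟨ν, hME.trans hν1, hν2, hν3, hν4⟩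

end Phases


open Finset in
/-- Phase 2: clearing the row `D1`, keeping the column `K1` free. -/
lemma phase2 {d k r : ℕ} (D1 : Fin d) (K1 : Fin k) :
    ∀ (m : ℕ) (μ : Fin r → Node 0 d k), Function.Injective μ →
      (∀ x, nd x K1 ∉ Set.range μ) → (∀ y, ∃ x, nd x y ∉ Set.range μ) →
      (univ.filter fun i => (pr (μ i)).1 = D1).card ≤ m →
      ∃ ν, ME μ ν ∧ Function.Injective ν ∧
        (∀ x, nd x K1 ∉ Set.range ν) ∧ ∀ y, nd D1 y ∉ Set.range ν := by
  intro m
  induction m with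
  | zero =>
    intro μ hinj hcol hfree hcard
    refine ⟨μ, ME.refl μ, hinj, hcol, fun y hy => ?_⟩
    obtain ⟨i, hi⟩ := hy
    have : i ∈ univ.filter fun i => (pr (μ i)).1 = D1 := by simp [hi]
    rw [Finset.card_eq_zero.mp (Nat.le_zero.mp hcard)] at this
    exact absurd this (Finset.notMem_empty i)
  | succ m ih =>
    intro μ hinj hcol hfree hcard
    by_cases h0 : (univ.filter fun i => (pr (μ i)).1 = D1).card = 0
    · exact ih μ hinj hcol hfree (by omega)
    · classical
      obtain ⟨i, hi0⟩ := Finset.card_pos.mp (Nat.pos_of_ne_zero h0)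
      rw [Finset.mem_filter] at hi0
      set y : Fin k := (pr (μ i)).2 with hy
      have hiv : μ i = nd D1 y := by
        conv_lhs => rw [nd_pr (μ i)]
        rw [hi0.2]
      have hyK : y ≠ K1 := by
        rintro rfl
        exact hcol D1 ⟨i, hiv⟩
      obtain ⟨x0, hx0⟩ := hfree y
      have hxD : D1 ≠ x0 := by
        rintro rfl
        exact hx0 ⟨i, hiv⟩
      have hME := qv_stepME hinj hxD hyK (hcol D1) (hcol x0) hx0 hiv
      have hinj2 := update_injective hinj hx0 i
      set μ2 := Function.update μ i (nd x0 y) with hμ2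
      have hcol2 : ∀ x, nd x K1 ∉ Set.range μ2 := fun x =>
        not_mem_range_update hinj (nd_ne_right (Ne.symm hyK)) (Or.inl (hcol x))
      have hfree2 : ∀ y', ∃ x, nd x y' ∉ Set.range μ2 := by
        intro y'
        rcases eq_or_ne y' y with rfl | hy'
        · exact ⟨D1, not_mem_range_update hinj (nd_ne_left hxD) (Or.inr hiv.symm)⟩
        · obtain ⟨x'', hx''⟩ := hfree y'
          exact ⟨x'', not_mem_range_update hinj (nd_ne_right hy') (Or.inl hx'')⟩
      have hcard2 : (univ.filter fun j => (pr (μ2 j)).1 = D1).card ≤ m := by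
        have hsub : (univ.filter fun j => (pr (μ2 j)).1 = D1) ⊆
            (univ.filter fun j => (pr (μ j)).1 = D1).erase i := by
          intro j hj
          rw [Finset.mem_filter] at hj
          rcases eq_or_ne j i with rfl | hji
          · rw [hμ2, Function.update_self] at hj
            exact absurd hj.2 (by simpa using Ne.symm hxD)
          · rw [hμ2, Function.update_of_ne hji] at hj
            exact Finset.mem_erase.mpr ⟨hji, by simp [hj.2]⟩
        have hic : i ∈ univ.filter fun j => (pr (μ j)).1 = D1 := by simp [hi0.2]
        calc _ ≤ ((univ.filter fun j => (pr (μ j)).1 = D1).erase i).card :=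
              Finset.card_le_card hsub
          _ = (univ.filter fun j => (pr (μ j)).1 = D1).card - 1 :=
              Finset.card_erase_of_mem hic
          _ ≤ m := by omega
      obtain ⟨ν, hν1, hν2, hν3, hν4⟩ := ih μ2 hinj2 hcol2 hfree2 hcard2
      exact ⟨ν, hME.trans hν1, hν2, hν3, hν4⟩


/-- Routing lemma: with the spare row `D1` and column `K1` free, any entry can be moved
to any free interior cell. -/
lemma routeME {d k r : ℕ} {D1 : Fin d} {K1 : Fin k} {μ : Fin r → Node 0 d k}
    (hinj : Function.Injective μ)
    (hcol : ∀ x, nd x K1 ∉ Set.range μ) (hrow : ∀ y, nd D1 y ∉ Set.range μ)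
    {i : Fin r} {x p : Fin d} {y q : Fin k}
    (hx : x ≠ D1) (hy : y ≠ K1) (hp : p ≠ D1) (hq : q ≠ K1)
    (hi : μ i = nd x y) (ht : nd p q ∉ Set.range μ) :
    ME μ (Function.update μ i (nd p q)) := by
  rcases eq_or_ne x p with rfl | hxp
  · rcases eq_or_ne y q with rfl | hyq
    · exact absurd ⟨i, hi⟩ ht
    · exact qh_stepME hinj hx hyq (hrow y) (hrow q) ht hi
  · rcases eq_or_ne y q with rfl | hyq
    · exact qv_stepME hinj hxp hy (hcol x) (hcol p) ht hi
    · -- four moves through the spare row and column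
      have s1 : ME μ (Function.update μ i (nd D1 y)) :=
        qv_stepME hinj hx hy (hcol x) (hcol D1) (hrow y) hi
      have hinj1 := update_injective hinj (hrow y) i
      have s2 : ME (Function.update μ i (nd D1 y))
          (Function.update μ i (nd D1 K1)) := by
        have := qh_stepME (x := D1) (x' := x) (y := y) (y' := K1) hinj1
          (Ne.symm hx) hy
          (not_mem_range_update hinj (nd_ne_left hx) (Or.inr hi.symm))
          (not_mem_range_update hinj (nd_ne_left hx) (Or.inl (hcol x)))
          (not_mem_range_update hinj (nd_ne_right (Ne.symm hy)) (Or.inl (hcol D1)))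
          (Function.update_self i (nd D1 y) μ)
        rwa [Function.update_idem] at this
      have hinj2 := update_injective hinj (hcol D1) i
      have s3 : ME (Function.update μ i (nd D1 K1))
          (Function.update μ i (nd D1 q)) := by
        have := qh_stepME (x := D1) (x' := p) (y := K1) (y' := q) hinj2
          (Ne.symm hp) (Ne.symm hq)
          (not_mem_range_update hinj (nd_ne_left hp) (Or.inl (hcol p)))
          (not_mem_range_update hinj (nd_ne_left hp) (Or.inl ht))
          (not_mem_range_update hinj (nd_ne_right hq) (Or.inl (hrow q)))
          (Function.update_self i (nd D1 K1) μ)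
        rwa [Function.update_idem] at this
      have hinj3 := update_injective hinj (hrow q) i
      have s4 : ME (Function.update μ i (nd D1 q))
          (Function.update μ i (nd p q)) := by
        have := qv_stepME (x := D1) (x' := p) (y := q) (y' := K1) hinj3
          (Ne.symm hp) hq
          (not_mem_range_update hinj (nd_ne_right (Ne.symm hq)) (Or.inl (hcol D1)))
          (not_mem_range_update hinj (nd_ne_left hp) (Or.inl (hcol p)))
          (not_mem_range_update hinj (nd_ne_left hp) (Or.inl ht))
          (Function.update_self i (nd D1 q) μ)
        rwa [Function.update_idem] at this
      exact ((s1.trans s2).trans s3).trans s4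

/-- Transposition gadget: with the spare row and column free, the entries at two
positions can be interchanged. -/
lemma swapME {d k r : ℕ} {D1 : Fin d} {K1 : Fin k} {μ : Fin r → Node 0 d k}
    (hinj : Function.Injective μ)
    (hcol : ∀ x, nd x K1 ∉ Set.range μ) (hrow : ∀ y, nd D1 y ∉ Set.range μ)
    {i j : Fin r} (hij : i ≠ j) {x p : Fin d} {y q : Fin k}
    (hx : x ≠ D1) (hy : y ≠ K1) (hp : p ≠ D1) (hq : q ≠ K1)
    (hi : μ i = nd x y) (hj : μ j = nd p q) :
    ME μ (μ ∘ Equiv.swap i j) := by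
  classical
  have hne : nd x y ≠ nd p q := by
    rw [← hi, ← hj]; exact fun h => hij (hinj h)
  rcases eq_or_ne x p with rfl | hxp
  · have hyq : y ≠ q := fun h => hne (by rw [h])
    exact qh_swapME hx hyq (hrow y) (hrow q) hi hj
  · rcases eq_or_ne y q with rfl | hyq
    · exact qv_swapME hxp hy (hcol x) (hcol p) hi hj
    · by_cases hm : nd x q ∈ Set.range μ
      · -- three swaps through the entry at (x, q)
        obtain ⟨l, hl⟩ := hm
        have hli : l ≠ i := fun h =>
          (nd_ne_right (Ne.symm hyq) : nd x q ≠ nd x y) (by rw [← hl, ← hi, h])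
        have hlj : l ≠ j := fun h =>
          (nd_ne_left hxp : nd x q ≠ nd p q) (by rw [← hl, ← hj, h])
        have s1 : ME μ (μ ∘ Equiv.swap i l) :=
          qh_swapME hx hyq (hrow y) (hrow q) hi hl
        have e1i : (μ ∘ Equiv.swap i l) i = nd x q := by
          simp only [Function.comp_apply, Equiv.swap_apply_left]; exact hl
        have e1j : (μ ∘ Equiv.swap i l) j = nd p q := by
          simp only [Function.comp_apply,
            Equiv.swap_apply_of_ne_of_ne hij.symm (Ne.symm hlj)]; exact hj
        have s2 : ME (μ ∘ Equiv.swap i l) ((μ ∘ Equiv.swap i l) ∘ Equiv.swap i j) := by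
          refine qv_swapME (μ := μ ∘ Equiv.swap i l) hxp hq ?_ ?_ e1i e1j
          · rw [range_comp_swap]; exact hcol x
          · rw [range_comp_swap]; exact hcol p
        have e2j : ((μ ∘ Equiv.swap i l) ∘ Equiv.swap i j) j = nd x q := by
          simp only [Function.comp_apply, Equiv.swap_apply_right]
          simp only [Equiv.swap_apply_left]; exact hl
        have e2l : ((μ ∘ Equiv.swap i l) ∘ Equiv.swap i j) l = nd x y := by
          simp only [Function.comp_apply, Equiv.swap_apply_of_ne_of_ne hli hlj,
            Equiv.swap_apply_right]; exact hi
        have s3 : ME ((μ ∘ Equiv.swap i l) ∘ Equiv.swap i j)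
            (((μ ∘ Equiv.swap i l) ∘ Equiv.swap i j) ∘ Equiv.swap j l) := by
          refine qh_swapME (μ := (μ ∘ Equiv.swap i l) ∘ Equiv.swap i j)
            hx (Ne.symm hyq) ?_ ?_ e2j e2l
          · rw [range_comp_swap, range_comp_swap]; exact hrow q
          · rw [range_comp_swap, range_comp_swap]; exact hrow y
        have hfin : (((μ ∘ Equiv.swap i l) ∘ Equiv.swap i j) ∘ Equiv.swap j l) =
            μ ∘ Equiv.swap i j := by
          funext m
          simp only [Function.comp_apply]
          congr 1
          rcases eq_or_ne m i with rfl | hmi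
          · simp only [Equiv.swap_apply_of_ne_of_ne hij (Ne.symm hli),
              Equiv.swap_apply_left, Equiv.swap_apply_of_ne_of_ne hij.symm (Ne.symm hlj)]
          rcases eq_or_ne m j with rfl | hmj
          · simp only [Equiv.swap_apply_left, Equiv.swap_apply_of_ne_of_ne hli hlj,
              Equiv.swap_apply_right]
          rcases eq_or_ne m l with rfl | hml
          · simp only [Equiv.swap_apply_right, Equiv.swap_apply_left,
              Equiv.swap_apply_of_ne_of_ne hli hlj]
          · simp only [Equiv.swap_apply_of_ne_of_ne hmj hml,
              Equiv.swap_apply_of_ne_of_ne hmi hmj, Equiv.swap_apply_of_ne_of_ne hmi hml]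
        exact (s1.trans s2).trans (hfin ▸ s3)
      · -- replace, swap, replace back
        have s1 : ME μ (Function.update μ i (nd x q)) :=
          qh_stepME hinj hx hyq (hrow y) (hrow q) hm hi
        have hinj1 := update_injective hinj hm i
        have e1i : Function.update μ i (nd x q) i = nd x q := Function.update_self _ _ _
        have e1j : Function.update μ i (nd x q) j = nd p q := by
          rw [Function.update_of_ne (Ne.symm hij)]; exact hj
        have s2 : ME (Function.update μ i (nd x q))
            ((Function.update μ i (nd x q)) ∘ Equiv.swap i j) :=
          qv_swapME (μ := Function.update μ i (nd x q)) hxp hq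
            (not_mem_range_update hinj (nd_ne_right (Ne.symm hq)) (Or.inl (hcol x)))
            (not_mem_range_update hinj (nd_ne_right (Ne.symm hq)) (Or.inl (hcol p)))
            e1i e1j
        have e2j : ((Function.update μ i (nd x q)) ∘ Equiv.swap i j) j = nd x q := by
          show Function.update μ i (nd x q) (Equiv.swap i j j) = nd x q
          rw [Equiv.swap_apply_right, Function.update_self]
        have hinj2 := comp_swap_injective hinj1 i j
        have s3 : ME ((Function.update μ i (nd x q)) ∘ Equiv.swap i j)
            (Function.update ((Function.update μ i (nd x q)) ∘ Equiv.swap i j) j (nd x y)) := by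
          refine qh_stepME (μ := (Function.update μ i (nd x q)) ∘ Equiv.swap i j)
            (x := x) (x' := D1) (y := q) (y' := y) hinj2 hx (Ne.symm hyq) ?_ ?_ ?_ e2j
          · rw [range_comp_swap]
            exact not_mem_range_update hinj (nd_ne_left (Ne.symm hx)) (Or.inl (hrow q))
          · rw [range_comp_swap]
            exact not_mem_range_update hinj (nd_ne_left (Ne.symm hx)) (Or.inl (hrow y))
          · rw [range_comp_swap]
            exact not_mem_range_update hinj (nd_ne_right hyq) (Or.inr hi.symm)
        have hfin : Function.update ((Function.update μ i (nd x q)) ∘ Equiv.swap i j) j (nd x y)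
            = μ ∘ Equiv.swap i j := by
          funext m
          rcases eq_or_ne m j with rfl | hmj
          · rw [Function.update_self, Function.comp_apply, Equiv.swap_apply_right, hi]
          · rw [Function.update_of_ne hmj, Function.comp_apply, Function.comp_apply]
            rcases eq_or_ne m i with rfl | hmi
            · rw [Equiv.swap_apply_left, Function.update_of_ne (Ne.symm hij)]
            · rw [Equiv.swap_apply_of_ne_of_ne hmi hmj, Function.update_of_ne hmi]
        exact (s1.trans s2).trans (hfin ▸ s3)


/-- The canonical irreducible `r`-marking: the first `r` cells of the interior grid. -/
def canon {d k r : ℕ} (hr : r ≤ (d-1)*(k-1)) : Fin r → Node 0 d k := fun i =>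
  let p := finProdFinEquiv.symm (Fin.castLE hr i)
  nd ⟨p.1.1, lt_of_lt_of_le p.1.2 (Nat.sub_le d 1)⟩
     ⟨p.2.1, lt_of_lt_of_le p.2.2 (Nat.sub_le k 1)⟩

lemma canon_injective {d k r : ℕ} (hr : r ≤ (d-1)*(k-1)) :
    Function.Injective (canon (d := d) (k := k) hr) := by
  intro a b hab
  rw [canon, canon] at hab
  obtain ⟨h1, h2⟩ := nd_inj.mp hab
  have h1' := congrArg Fin.val h1
  have h2' := congrArg Fin.val h2
  have hp : finProdFinEquiv.symm (Fin.castLE hr a) = finProdFinEquiv.symm (Fin.castLE hr b) := by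
    apply Prod.ext
    · exact Fin.ext h1'
    · exact Fin.ext h2'
  have := finProdFinEquiv.symm.injective hp
  exact Fin.castLE_injective hr this

lemma canon_fst_lt {d k r : ℕ} (hr : r ≤ (d-1)*(k-1)) (i : Fin r) :
    (pr (canon (d := d) (k := k) hr i)).1.1 < d - 1 :=
  (finProdFinEquiv.symm (Fin.castLE hr i)).1.2

lemma canon_snd_lt {d k r : ℕ} (hr : r ≤ (d-1)*(k-1)) (i : Fin r) :
    (pr (canon (d := d) (k := k) hr i)).2.1 < k - 1 :=
  (finProdFinEquiv.symm (Fin.castLE hr i)).2.2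

open Finset in
/-- Phase 3: with the spare row and column free, reach the canonical marking. -/
lemma phase3 {d k r : ℕ} (hd2 : 2 ≤ d) (hk2 : 2 ≤ k) (hr : r ≤ (d-1)*(k-1)) :
    ∀ (m : ℕ) (μ : Fin r → Node 0 d k), Function.Injective μ →
      (∀ x, nd x ⟨k-1, by omega⟩ ∉ Set.range μ) →
      (∀ y, nd ⟨d-1, by omega⟩ y ∉ Set.range μ) →
      (univ.filter fun i => μ i ≠ canon hr i).card ≤ m →
      ME μ (canon hr) := by
  classical
  set D1 : Fin d := ⟨d-1, by omega⟩ with hD1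
  set K1 : Fin k := ⟨k-1, by omega⟩ with hK1
  intro m
  induction m with
  | zero =>
    intro μ hinj hcol hrow hcard
    have : μ = canon hr := by
      funext i
      by_contra hne
      have : i ∈ univ.filter fun i => μ i ≠ canon hr i := by simp [hne]
      rw [Finset.card_eq_zero.mp (Nat.le_zero.mp hcard)] at this
      exact absurd this (Finset.notMem_empty i)
    rw [this]; exact ME.refl _
  | succ m ih =>
    intro μ hinj hcol hrow hcard
    by_cases h0 : (univ.filter fun i => μ i ≠ canon hr i).card = 0
    · exact ih μ hinj hcol hrow (by omega)
    · obtain ⟨i, hi0⟩ := Finset.card_pos.mp (Nat.pos_of_ne_zero h0)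
      rw [Finset.mem_filter] at hi0
      have hi0' : μ i ≠ canon hr i := hi0.2
      -- coordinates of the entry and of the target
      set x : Fin d := (pr (μ i)).1 with hxdef
      set y : Fin k := (pr (μ i)).2 with hydef
      have hiv : μ i = nd x y := nd_pr (μ i)
      have hxD : x ≠ D1 := fun h => hrow y ⟨i, by rw [hiv, h]⟩
      have hyK : y ≠ K1 := fun h => hcol x ⟨i, by rw [hiv, h]⟩
      set p : Fin d := (pr (canon hr i)).1 with hpdef
      set q : Fin k := (pr (canon hr i)).2 with hqdef
      have htv : canon hr i = nd p q := nd_pr (canon hr i)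
      have hpD : p ≠ D1 := by
        intro h
        have h' := canon_fst_lt hr i
        rw [← hpdef, h] at h'
        exact absurd h' (by simp [hD1])
      have hqK : q ≠ K1 := by
        intro h
        have h' := canon_snd_lt hr i
        rw [← hqdef, h] at h'
        exact absurd h' (by simp [hK1])
      by_cases hmem : canon hr i ∈ Set.range μ
      · -- swap with the position already occupying the target cell
        obtain ⟨j, hj⟩ := hmem
        have hij : i ≠ j := by
          intro h
          subst h
          exact hi0' hj
        have hME : ME μ (μ ∘ Equiv.swap i j) :=
          swapME hinj hcol hrow hij hxD hyK hpD hqK hiv (by rw [hj]; exact htv)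
        have hinj2 := comp_swap_injective hinj i j
        have hcol2 : ∀ x', nd x' K1 ∉ Set.range (μ ∘ Equiv.swap i j) := by
          intro x'; rw [range_comp_swap]; exact hcol x'
        have hrow2 : ∀ y', nd D1 y' ∉ Set.range (μ ∘ Equiv.swap i j) := by
          intro y'; rw [range_comp_swap]; exact hrow y'
        have hcard2 : (univ.filter fun l => (μ ∘ Equiv.swap i j) l ≠ canon hr l).card ≤ m := by
          have hsub : (univ.filter fun l => (μ ∘ Equiv.swap i j) l ≠ canon hr l) ⊆
              (univ.filter fun l => μ l ≠ canon hr l).erase i := by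
            intro l hl
            rw [Finset.mem_filter] at hl
            rcases eq_or_ne l i with rfl | hli
            · exact absurd (by simp only [Function.comp_apply,
                Equiv.swap_apply_left]; exact hj) hl.2
            rcases eq_or_ne l j with rfl | hlj
            · refine Finset.mem_erase.mpr ⟨hli, ?_⟩
              simp only [Finset.mem_filter, Finset.mem_univ, true_and]
              intro h
              exact hij (canon_injective hr (by rw [← hj, h]))
            · refine Finset.mem_erase.mpr ⟨hli, ?_⟩
              simp only [Finset.mem_filter, Finset.mem_univ, true_and]
              have : (μ ∘ Equiv.swap i j) l = μ l := by
                simp only [Function.comp_apply, Equiv.swap_apply_of_ne_of_ne hli hlj]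
              rw [this] at hl
              exact hl.2
          have hic : i ∈ univ.filter fun l => μ l ≠ canon hr l := by
            simp only [Finset.mem_filter, Finset.mem_univ, true_and]; exact hi0'
          calc _ ≤ ((univ.filter fun l => μ l ≠ canon hr l).erase i).card :=
                Finset.card_le_card hsub
            _ = (univ.filter fun l => μ l ≠ canon hr l).card - 1 :=
                Finset.card_erase_of_mem hic
            _ ≤ m := by omega
        exact hME.trans (ih _ hinj2 hcol2 hrow2 hcard2)
      · -- move the entry to the free target cell
        have hME : ME μ (Function.update μ i (canon hr i)) := by
          rw [htv]
          exact routeME hinj hcol hrow hxD hyK hpD hqK hiv (htv ▸ hmem)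
        have hinj2 := update_injective hinj hmem i
        have hcol2 : ∀ x', nd x' K1 ∉ Set.range (Function.update μ i (canon hr i)) := by
          intro x'
          refine not_mem_range_update hinj ?_ (Or.inl (hcol x'))
          rw [htv]; exact nd_ne_right (Ne.symm hqK)
        have hrow2 : ∀ y', nd D1 y' ∉ Set.range (Function.update μ i (canon hr i)) := by
          intro y'
          refine not_mem_range_update hinj ?_ (Or.inl (hrow y'))
          rw [htv]; exact nd_ne_left (Ne.symm hpD)
        have hcard2 : (univ.filter fun l =>
            Function.update μ i (canon hr i) l ≠ canon hr l).card ≤ m := by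
          have hsub : (univ.filter fun l => Function.update μ i (canon hr i) l ≠ canon hr l) ⊆
              (univ.filter fun l => μ l ≠ canon hr l).erase i := by
            intro l hl
            rw [Finset.mem_filter] at hl
            rcases eq_or_ne l i with rfl | hli
            · exact absurd (Function.update_self _ _ _) hl.2
            · refine Finset.mem_erase.mpr ⟨hli, ?_⟩
              simp only [Finset.mem_filter, Finset.mem_univ, true_and]
              have := hl.2
              rwa [Function.update_of_ne hli] at this
          have hic : i ∈ univ.filter fun l => μ l ≠ canon hr l := by
            simp only [Finset.mem_filter, Finset.mem_univ, true_and]; exact hi0'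
          calc _ ≤ ((univ.filter fun l => μ l ≠ canon hr l).erase i).card :=
                Finset.card_le_card hsub
            _ = (univ.filter fun l => μ l ≠ canon hr l).card - 1 :=
                Finset.card_erase_of_mem hic
            _ ≤ m := by omega
        exact hME.trans (ih _ hinj2 hcol2 hrow2 hcard2)

/-- Assume `n = 0`. Then any two irreducible `r`-markings on the curve
`Γ` are equivalent, i.e., one can be obtained from the other by a finite sequence of
D-moves, Qʰ-moves and Qᵛ-moves. -/
theorem stmt8 (d k r : ℕ) (hd : 0 < d)
    (μ μ' : Fin r → Node 0 d k)
    (hμ : Function.Injective μ) (hμ' : Function.Injective μ')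
    (h1 : IsIrreducible μ) (h2 : IsIrreducible μ') :
    MarkEquiv0 μ μ' := by
  classical
  rcases Nat.eq_zero_or_pos r with rfl | hr0
  · have : μ = μ' := funext fun i => i.elim0
    rw [this]
    exact Relation.ReflTransGen.refl
  · obtain ⟨x0, y0, hv⟩ := node_cases (μ ⟨0, hr0⟩)
    obtain ⟨hd2, hk2⟩ := two_le_of_mem h1 ⟨⟨0, hr0⟩, hv⟩
    have hk0 : 0 < k := by omega
    set K1 : Fin k := ⟨k - 1, by omega⟩ with hK1
    set D1 : Fin d := ⟨d - 1, by omega⟩ with hD1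
    -- reduce each marking to one supported away from the spare row and column
    have main : ∀ ν : Fin r → Node 0 d k, Function.Injective ν → IsIrreducible ν →
        ∃ ρ, ME ν ρ ∧ Function.Injective ρ ∧
          (∀ x, nd x K1 ∉ Set.range ρ) ∧ (∀ y, nd D1 y ∉ Set.range ρ) := by
      intro ν hinj hirr
      obtain ⟨ν1, m1, i1, irr1, c1⟩ := phase1 K1 (by omega) _ ν hinj hirr le_rfl
      have free1 : ∀ y, ∃ x, nd x y ∉ Set.range ν1 := fun y =>
        exists_free_in_col irr1 (by omega) y
      obtain ⟨ν2, m2, i2, c2, r2⟩ := phase2 D1 K1 _ ν1 i1 c1 free1 le_rfl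
      exact ⟨ν2, m1.trans m2, i2, c2, r2⟩
    obtain ⟨ρ, hme, hρi, hρc, hρr⟩ := main μ hμ h1
    obtain ⟨ρ', hme', hρi', hρc', hρr'⟩ := main μ' hμ' h2
    -- the interior grid bound
    have hrle : r ≤ (d - 1) * (k - 1) := by
      have hbx : ∀ i : Fin r, (pr (ρ i)).1.1 < d - 1 := by
        intro i
        have hiv : ρ i = nd (pr (ρ i)).1 (pr (ρ i)).2 := nd_pr (ρ i)
        have hne : (pr (ρ i)).1 ≠ D1 := fun h =>
          hρr (pr (ρ i)).2 ⟨i, by conv_lhs => rw [hiv, h]⟩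
        have := ((pr (ρ i)).1).2
        have hne' : (pr (ρ i)).1.1 ≠ d - 1 := fun h => hne (Fin.ext (by rw [h, hD1]))
        omega
      have hby : ∀ i : Fin r, (pr (ρ i)).2.1 < k - 1 := by
        intro i
        have hiv : ρ i = nd (pr (ρ i)).1 (pr (ρ i)).2 := nd_pr (ρ i)
        have hne : (pr (ρ i)).2 ≠ K1 := fun h =>
          hρc (pr (ρ i)).1 ⟨i, by conv_lhs => rw [hiv, h]⟩
        have := ((pr (ρ i)).2).2
        have hne' : (pr (ρ i)).2.1 ≠ k - 1 := fun h => hne (Fin.ext (by rw [h, hK1]))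
        omega
      have finj : Function.Injective
          (fun i : Fin r => ((⟨(pr (ρ i)).1.1, hbx i⟩ : Fin (d-1)),
            (⟨(pr (ρ i)).2.1, hby i⟩ : Fin (k-1)))) := by
        intro a b hab
        simp only [Prod.mk.injEq, Fin.mk.injEq] at hab
        have hpa : pr (ρ a) = pr (ρ b) := Prod.ext (Fin.ext hab.1) (Fin.ext hab.2)
        have : ρ a = ρ b := by rw [nd_pr (ρ a), nd_pr (ρ b), hpa]
        exact hρi this
      have := Fintype.card_le_of_injective _ finj
      simpa using this
    have e1 : ME ρ (canon hrle) := phase3 hd2 hk2 hrle _ ρ hρi hρc hρr le_rfl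
    have e2 : ME ρ' (canon hrle) := phase3 hd2 hk2 hrle _ ρ' hρi' hρc' hρr' le_rfl
    exact ((hme.trans (e1.trans e2.symm)).trans hme'.symm).1

end SeveriMarkings
end
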